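/- Let Ω ⊆ ℝ³ be open and I ⊆ ℝ an open interval. Let v : Ω×I → ℝ³, q : Ω×I → ℝ and b : Ω×I → ℝ^{3×3} be twice continuously differentiable, let ψ : Ω×I → ℝ³ and a : Ω×I → ℝ^{3×3} be continuously differentiable (all jointly in space and time), and let E : I → ℝ be a function of time only. Assume: (i) the Piola identity Σ_j ∂_j b_{ji} = 0 on Ω×I for each i; (ii) the momentum equation ∂_t v_i + Σ_{k,m}(v_m − ψ_m) a_{km} ∂_k v_i + Σ_k a_{ki} ∂_k q = 0 on Ω×I for i = 1,2,3; (iii) the pressure equation −Σ_j ∂_j( Σ_{i,k} b_{ji} a_{ki} ∂_k q ) = −Σ_{i,j} ∂_j( (∂_t b_{ji}) v_i ) + Σ_{i,j,k,m} b_{ji} ∂_j( (v_m − ψ_m) a_{km} ) ∂_k v_i − Σ_{i,j,k,m} (v_m − ψ_m) a_{km} (∂_k b_{ji}) (∂_j v_i) + E(t) on Ω×I. Then the variable divergence 𝒟 = Σ_{i,j} b_{ji} ∂_j v_i satisfies the transport equation ∂_t 𝒟 + Σ_{k,m} (v_m − ψ_m) a_{km} ∂_k 𝒟 = E(t) on Ω×I.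 -/

import Mathlib

open scoped BigOperators

noncomputable section

/-- The spatial partial derivative `∂_j f` of a scalar function on space-time `ℝ³ × ℝ`. -/
def pd (j : Fin 3) (f : (Fin 3 → ℝ) × ℝ → ℝ) (p : (Fin 3 → ℝ) × ℝ) : ℝ :=
  fderiv ℝ f p (Pi.single j 1, 0)

/-- The time partial derivative `∂_t f` of a scalar function on space-time `ℝ³ × ℝ`. -/
def pt (f : (Fin 3 → ℝ) × ℝ → ℝ) (p : (Fin 3 → ℝ) × ℝ) : ℝ :=
  fderiv ℝ f p (0, 1)

namespace Stmt11Aux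

variable {f g : (Fin 3 → ℝ) × ℝ → ℝ} {p : (Fin 3 → ℝ) × ℝ}


variable {f g : (Fin 3 → ℝ) × ℝ → ℝ} {p : (Fin 3 → ℝ) × ℝ}

lemma dd_add (w : (Fin 3 → ℝ) × ℝ) (hf : DifferentiableAt ℝ f p) (hg : DifferentiableAt ℝ g p) :
    fderiv ℝ (fun y => f y + g y) p w = fderiv ℝ f p w + fderiv ℝ g p w := by
  rw [fderiv_fun_add hf hg]; simp

lemma dd_mul (w : (Fin 3 → ℝ) × ℝ) (hf : DifferentiableAt ℝ f p) (hg : DifferentiableAt ℝ g p) :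
    fderiv ℝ (fun y => f y * g y) p w = fderiv ℝ f p w * g p + f p * fderiv ℝ g p w := by
  rw [fderiv_fun_mul hf hg]; simp; ring

lemma dd_sum {ι : Type*} [Fintype ι] (w : (Fin 3 → ℝ) × ℝ) {F : ι → (Fin 3 → ℝ) × ℝ → ℝ}
    (h : ∀ i ∈ Finset.univ, DifferentiableAt ℝ (F i) p) :
    fderiv ℝ (fun y => ∑ i, F i y) p w = ∑ i, fderiv ℝ (F i) p w := by
  rw [fderiv_fun_sum h]; simp

lemma dd_zero (w : (Fin 3 → ℝ) × ℝ) (h : ∀ᶠ y in nhds p, f y = 0) :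
    fderiv ℝ f p w = 0 := by
  have h' : f =ᶠ[nhds p] fun _ => (0 : ℝ) := h
  rw [h'.fderiv_eq]; simp

lemma diffAt_dd (hf : ContDiffAt ℝ 2 f p) (w : (Fin 3 → ℝ) × ℝ) :
    DifferentiableAt ℝ (fun y => fderiv ℝ f y w) p := by
  have h1 : ContDiffAt ℝ 1 (fderiv ℝ f) p := hf.fderiv_right (by norm_num)
  exact (h1.differentiableAt one_ne_zero).clm_apply (differentiableAt_const w)

lemma dd_comm (hf : ContDiffAt ℝ 2 f p) (u w : (Fin 3 → ℝ) × ℝ) :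
    fderiv ℝ (fun y => fderiv ℝ f y w) p u = fderiv ℝ (fun y => fderiv ℝ f y u) p w := by
  have hsymm := hf.isSymmSndFDerivAt (by simp [minSmoothness_of_isRCLikeNormedField])
  have hd : DifferentiableAt ℝ (fderiv ℝ f) p :=
    (hf.fderiv_right (m := 1) (by norm_num)).differentiableAt one_ne_zero
  have key : ∀ z : (Fin 3 → ℝ) × ℝ,
      fderiv ℝ (fun y => fderiv ℝ f y z) p = (fderiv ℝ (fderiv ℝ f) p).flip z := by
    intro z
    have := fderiv_clm_apply (c := fderiv ℝ f) (u := fun _ => z) hd (differentiableAt_const z)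
    simpa using this
  rw [key, key]
  exact hsymm.eq u w

/-- pd / pt versions -/
lemma pd_add (j : Fin 3) (hf : DifferentiableAt ℝ f p) (hg : DifferentiableAt ℝ g p) :
    pd j (fun y => f y + g y) p = pd j f p + pd j g p := dd_add _ hf hg

lemma pt_add (hf : DifferentiableAt ℝ f p) (hg : DifferentiableAt ℝ g p) :
    pt (fun y => f y + g y) p = pt f p + pt g p := dd_add _ hf hg

lemma pd_mul (j : Fin 3) (hf : DifferentiableAt ℝ f p) (hg : DifferentiableAt ℝ g p) :
    pd j (fun y => f y * g y) p = pd j f p * g p + f p * pd j g p := dd_mul _ hf hg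

lemma pt_mul (hf : DifferentiableAt ℝ f p) (hg : DifferentiableAt ℝ g p) :
    pt (fun y => f y * g y) p = pt f p * g p + f p * pt g p := dd_mul _ hf hg

lemma pd_sum {ι : Type*} [Fintype ι] (j : Fin 3) {F : ι → (Fin 3 → ℝ) × ℝ → ℝ}
    (h : ∀ i ∈ Finset.univ, DifferentiableAt ℝ (F i) p) :
    pd j (fun y => ∑ i, F i y) p = ∑ i, pd j (F i) p := dd_sum _ h

lemma pt_sum {ι : Type*} [Fintype ι] {F : ι → (Fin 3 → ℝ) × ℝ → ℝ}
    (h : ∀ i ∈ Finset.univ, DifferentiableAt ℝ (F i) p) :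
    pt (fun y => ∑ i, F i y) p = ∑ i, pt (F i) p := dd_sum _ h

lemma pd_zero (j : Fin 3) (h : ∀ᶠ y in nhds p, f y = 0) : pd j f p = 0 := dd_zero _ h

lemma pt_zero (h : ∀ᶠ y in nhds p, f y = 0) : pt f p = 0 := dd_zero _ h

lemma diffAt_pd (hf : ContDiffAt ℝ 2 f p) (j : Fin 3) :
    DifferentiableAt ℝ (fun y => pd j f y) p := diffAt_dd hf _

lemma diffAt_pt (hf : ContDiffAt ℝ 2 f p) :
    DifferentiableAt ℝ (fun y => pt f y) p := diffAt_dd hf _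

lemma pt_pd_comm (hf : ContDiffAt ℝ 2 f p) (j : Fin 3) :
    pt (fun y => pd j f y) p = pd j (fun y => pt f y) p := dd_comm hf _ _

lemma pd_pd_comm (hf : ContDiffAt ℝ 2 f p) (j k : Fin 3) :
    pd k (fun y => pd j f y) p = pd j (fun y => pd k f y) p := dd_comm hf _ _

end Stmt11Aux

open Stmt11Aux

/-- Under the Piola identity, the momentum equation, and the pressure
equation with compatibility correction `E(t)`, the variable divergence
`𝒟 = Σ_{i,j} b_{ji} ∂_j v_i` satisfies the transport equation
`∂_t 𝒟 + Σ_{k,m} (v_m − ψ_m) a_{km} ∂_k 𝒟 = E(t)` on `Ω×I`. -/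

theorem stmt11 (Ω : Set (Fin 3 → ℝ)) (hΩ : IsOpen Ω)
    (I : Set ℝ) (hI : ∃ t₀ t₁ : ℝ, I = Set.Ioo t₀ t₁)
    (v : (Fin 3 → ℝ) × ℝ → Fin 3 → ℝ)
    (q : (Fin 3 → ℝ) × ℝ → ℝ)
    (b : (Fin 3 → ℝ) × ℝ → Fin 3 → Fin 3 → ℝ)
    (ψ : (Fin 3 → ℝ) × ℝ → Fin 3 → ℝ)
    (a : (Fin 3 → ℝ) × ℝ → Fin 3 → Fin 3 → ℝ)
    (E : ℝ → ℝ)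
    (hv : ∀ i : Fin 3, ContDiffOn ℝ 2 (fun p => v p i) (Ω ×ˢ I))
    (hq : ContDiffOn ℝ 2 q (Ω ×ˢ I))
    (hb : ∀ j i : Fin 3, ContDiffOn ℝ 2 (fun p => b p j i) (Ω ×ˢ I))
    (hψ : ∀ i : Fin 3, ContDiffOn ℝ 1 (fun p => ψ p i) (Ω ×ˢ I))
    (ha : ∀ k i : Fin 3, ContDiffOn ℝ 1 (fun p => a p k i) (Ω ×ˢ I))
    (hPiola : ∀ p ∈ Ω ×ˢ I, ∀ i : Fin 3, (∑ j, pd j (fun y => b y j i) p) = 0)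
    (hmom : ∀ p ∈ Ω ×ˢ I, ∀ i : Fin 3,
      pt (fun y => v y i) p
        + (∑ k, ∑ m, (v p m - ψ p m) * a p k m * pd k (fun y => v y i) p)
        + (∑ k, a p k i * pd k q p) = 0)
    (hpress : ∀ p ∈ Ω ×ˢ I,
      -(∑ j, pd j (fun y => ∑ i, ∑ k, b y j i * a y k i * pd k q y) p)
      = -(∑ i, ∑ j, pd j (fun y => pt (fun z => b z j i) y * v y i) p)
        + (∑ i, ∑ j, ∑ k, ∑ m,
            b p j i * pd j (fun y => (v y m - ψ y m) * a y k m) p * pd k (fun y => v y i) p)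
        - (∑ i, ∑ j, ∑ k, ∑ m,
            (v p m - ψ p m) * a p k m * pd k (fun y => b y j i) p * pd j (fun y => v y i) p)
        + E p.2)
    (D : (Fin 3 → ℝ) × ℝ → ℝ)
    (hD : ∀ p, D p = ∑ i, ∑ j, b p j i * pd j (fun y => v y i) p) :
    ∀ p ∈ Ω ×ˢ I,
      pt D p + (∑ k, ∑ m, (v p m - ψ p m) * a p k m * pd k D p) = E p.2 := by
  intro p hp
  obtain ⟨t₀, t₁, rfl⟩ := hI
  have hpU : Ω ×ˢ Set.Ioo t₀ t₁ ∈ nhds p := (hΩ.prod isOpen_Ioo).mem_nhds hp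
  have cv : ∀ i, ContDiffAt ℝ 2 (fun y => v y i) p := fun i => (hv i).contDiffAt hpU
  have cq : ContDiffAt ℝ 2 q p := hq.contDiffAt hpU
  have cb : ∀ j i, ContDiffAt ℝ 2 (fun y => b y j i) p := fun j i => (hb j i).contDiffAt hpU
  have dv : ∀ i, DifferentiableAt ℝ (fun y => v y i) p :=
    fun i => (cv i).differentiableAt two_ne_zero
  have dq : DifferentiableAt ℝ q p := cq.differentiableAt two_ne_zero
  have db : ∀ j i, DifferentiableAt ℝ (fun y => b y j i) p :=
    fun j i => (cb j i).differentiableAt two_ne_zero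
  have dψ : ∀ m, DifferentiableAt ℝ (fun y => ψ y m) p :=
    fun m => ((hψ m).contDiffAt hpU).differentiableAt one_ne_zero
  have da : ∀ k m, DifferentiableAt ℝ (fun y => a y k m) p :=
    fun k m => ((ha k m).contDiffAt hpU).differentiableAt one_ne_zero
  have dpdv : ∀ j i, DifferentiableAt ℝ (fun y => pd j (fun z => v z i) y) p :=
    fun j i => diffAt_pd (cv i) j
  have dptv : ∀ i, DifferentiableAt ℝ (fun y => pt (fun z => v z i) y) p :=
    fun i => diffAt_pt (cv i)
  have dpdq : ∀ k, DifferentiableAt ℝ (fun y => pd k q y) p := fun k => diffAt_pd cq k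
  have dptb : ∀ j i, DifferentiableAt ℝ (fun y => pt (fun z => b z j i) y) p :=
    fun j i => diffAt_pt (cb j i)
  have hDf : D = fun y => ∑ i, ∑ j, b y j i * pd j (fun z => v z i) y := funext hD
  subst hDf
  have symV1 : ∀ j i, pt (fun y => pd j (fun z => v z i) y) p
      = pd j (fun y => pt (fun z => v z i) y) p := fun j i => pt_pd_comm (cv i) j
  have symV2 : ∀ j k i, pd k (fun y => pd j (fun z => v z i) y) p
      = pd j (fun y => pd k (fun z => v z i) y) p := fun j k i => pd_pd_comm (cv i) j k
  have H1a : pt (fun y => ∑ i, ∑ j, b y j i * pd j (fun z => v z i) y) p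
      = ∑ i, ∑ j, (pt (fun y => b y j i) p * pd j (fun z => v z i) p
          + b p j i * pt (fun y => pd j (fun z => v z i) y) p) := by
    refine (pt_sum fun i _ => ?_).trans (Finset.sum_congr rfl fun i _ => ?_)
    · exact DifferentiableAt.fun_sum fun j _ => (db j i).mul (dpdv j i)
    · exact (pt_sum fun j _ => (db j i).mul (dpdv j i)).trans
        (Finset.sum_congr rfl fun j _ => pt_mul (db j i) (dpdv j i))
  have H1b : ∀ k, pd k (fun y => ∑ i, ∑ j, b y j i * pd j (fun z => v z i) y) p
      = ∑ i, ∑ j, (pd k (fun y => b y j i) p * pd j (fun z => v z i) p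
          + b p j i * pd k (fun y => pd j (fun z => v z i) y) p) := by
    intro k
    refine (pd_sum k fun i _ => ?_).trans (Finset.sum_congr rfl fun i _ => ?_)
    · exact DifferentiableAt.fun_sum fun j _ => (db j i).mul (dpdv j i)
    · exact (pd_sum k fun j _ => (db j i).mul (dpdv j i)).trans
        (Finset.sum_congr rfl fun j _ => pd_mul k (db j i) (dpdv j i))
  have H2 : ∀ i j, pd j (fun y => pt (fun z => v z i) y) p
      + (∑ k, ∑ m, (pd j (fun y => (v y m - ψ y m) * a y k m) p * pd k (fun z => v z i) p
          + (v p m - ψ p m) * a p k m * pd j (fun y => pd k (fun z => v z i) y) p))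
      + (∑ k, (pd j (fun y => a y k i) p * pd k q p + a p k i * pd j (fun y => pd k q y) p))
      = 0 := by
    intro i j
    have h2 : DifferentiableAt ℝ
        (fun y => ∑ k, ∑ m, (v y m - ψ y m) * a y k m * pd k (fun z => v z i) y) p :=
      DifferentiableAt.fun_sum fun k _ => DifferentiableAt.fun_sum fun m _ =>
        (((dv m).sub (dψ m)).mul (da k m)).mul (dpdv k i)
    have h3 : DifferentiableAt ℝ (fun y => ∑ k, a y k i * pd k q y) p :=
      DifferentiableAt.fun_sum fun k _ => (da k i).mul (dpdq k)
    have hz : pd j (fun y => pt (fun z => v z i) y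
        + (∑ k, ∑ m, (v y m - ψ y m) * a y k m * pd k (fun z => v z i) y)
        + ∑ k, a y k i * pd k q y) p = 0 := by
      apply pd_zero
      filter_upwards [hpU] with y hy using hmom y hy i
    have e1 : pd j (fun y => pt (fun z => v z i) y
        + (∑ k, ∑ m, (v y m - ψ y m) * a y k m * pd k (fun z => v z i) y)
        + ∑ k, a y k i * pd k q y) p
        = pd j (fun y => pt (fun z => v z i) y) p
          + pd j (fun y => ∑ k, ∑ m, (v y m - ψ y m) * a y k m * pd k (fun z => v z i) y) p
          + pd j (fun y => ∑ k, a y k i * pd k q y) p :=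
      (pd_add j ((dptv i).fun_add h2) h3).trans (by rw [pd_add j (dptv i) h2])
    have e2 : pd j (fun y => ∑ k, ∑ m, (v y m - ψ y m) * a y k m * pd k (fun z => v z i) y) p
        = ∑ k, ∑ m, (pd j (fun y => (v y m - ψ y m) * a y k m) p * pd k (fun z => v z i) p
            + (v p m - ψ p m) * a p k m * pd j (fun y => pd k (fun z => v z i) y) p) := by
      refine (pd_sum j fun k _ => ?_).trans (Finset.sum_congr rfl fun k _ => ?_)
      · exact DifferentiableAt.fun_sum fun m _ => (((dv m).sub (dψ m)).mul (da k m)).mul (dpdv k i)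
      · exact (pd_sum j fun m _ => (((dv m).sub (dψ m)).mul (da k m)).mul (dpdv k i)).trans
          (Finset.sum_congr rfl fun m _ =>
            pd_mul j (((dv m).sub (dψ m)).mul (da k m)) (dpdv k i))
    have e3 : pd j (fun y => ∑ k, a y k i * pd k q y) p
        = ∑ k, (pd j (fun y => a y k i) p * pd k q p + a p k i * pd j (fun y => pd k q y) p) :=
      (pd_sum j fun k _ => (da k i).mul (dpdq k)).trans
        (Finset.sum_congr rfl fun k _ => pd_mul j (da k i) (dpdq k))
    rw [e1, e2, e3] at hz
    exact hz
  have T1 : ∀ j, pd j (fun y => ∑ i, ∑ k, b y j i * a y k i * pd k q y) p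
      = ∑ i, ∑ k, ((pd j (fun y => b y j i) p * a p k i + b p j i * pd j (fun y => a y k i) p)
            * pd k q p
          + b p j i * a p k i * pd j (fun y => pd k q y) p) := by
    intro j
    refine (pd_sum j fun i _ => ?_).trans (Finset.sum_congr rfl fun i _ => ?_)
    · exact DifferentiableAt.fun_sum fun k _ => ((db j i).mul (da k i)).mul (dpdq k)
    · refine (pd_sum j fun k _ => ((db j i).mul (da k i)).mul (dpdq k)).trans
        (Finset.sum_congr rfl fun k _ => ?_)
      have h := pd_mul j ((db j i).fun_mul (da k i)) (dpdq k)
      rw [pd_mul j (db j i) (da k i)] at h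
      exact h
  have T2 : ∀ i j, pd j (fun y => pt (fun z => b z j i) y * v y i) p
      = pd j (fun y => pt (fun z => b z j i) y) p * v p i
        + pt (fun z => b z j i) p * pd j (fun y => v y i) p :=
    fun i j => pd_mul j (dptb j i) (dv i)
  have H3 := hpress p hp
  simp only [T1, T2] at H3
  have H4 : ∀ i, (∑ j, pd j (fun y => b y j i) p) = 0 := hPiola p hp
  have H5 : ∀ i, (∑ j, pd j (fun y => pt (fun z => b z j i) y) p) = 0 := by
    intro i
    have hz : pt (fun y => ∑ j, pd j (fun z => b z j i) y) p = 0 := by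
      apply pt_zero
      filter_upwards [hpU] with y hy using hPiola y hy i
    rw [pt_sum (fun j _ => diffAt_pd (cb j i) j)] at hz
    calc (∑ j, pd j (fun y => pt (fun z => b z j i) y) p)
        = ∑ j, pt (fun y => pd j (fun z => b z j i) y) p :=
          Finset.sum_congr rfl fun j _ => (pt_pd_comm (cb j i) j).symm
      _ = 0 := hz
  rw [H1a]
  simp only [H1b]
  simp only [Fin.sum_univ_three] at H2 H3 H4 H5 ⊢
  linear_combination
      b p 0 0 * symV1 0 0
      + b p 1 0 * symV1 1 0
      + b p 2 0 * symV1 2 0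
      + b p 0 1 * symV1 0 1
      + b p 1 1 * symV1 1 1
      + b p 2 1 * symV1 2 1
      + b p 0 2 * symV1 0 2
      + b p 1 2 * symV1 1 2
      + b p 2 2 * symV1 2 2
      + ((v p 0 - ψ p 0) * a p 0 0 + (v p 1 - ψ p 1) * a p 0 1 + (v p 2 - ψ p 2) * a p 0 2) * b p 0 0 * symV2 0 0 0
      + ((v p 0 - ψ p 0) * a p 0 0 + (v p 1 - ψ p 1) * a p 0 1 + (v p 2 - ψ p 2) * a p 0 2) * b p 0 1 * symV2 0 0 1
      + ((v p 0 - ψ p 0) * a p 0 0 + (v p 1 - ψ p 1) * a p 0 1 + (v p 2 - ψ p 2) * a p 0 2) * b p 0 2 * symV2 0 0 2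
      + ((v p 0 - ψ p 0) * a p 1 0 + (v p 1 - ψ p 1) * a p 1 1 + (v p 2 - ψ p 2) * a p 1 2) * b p 0 0 * symV2 0 1 0
      + ((v p 0 - ψ p 0) * a p 1 0 + (v p 1 - ψ p 1) * a p 1 1 + (v p 2 - ψ p 2) * a p 1 2) * b p 0 1 * symV2 0 1 1
      + ((v p 0 - ψ p 0) * a p 1 0 + (v p 1 - ψ p 1) * a p 1 1 + (v p 2 - ψ p 2) * a p 1 2) * b p 0 2 * symV2 0 1 2
      + ((v p 0 - ψ p 0) * a p 2 0 + (v p 1 - ψ p 1) * a p 2 1 + (v p 2 - ψ p 2) * a p 2 2) * b p 0 0 * symV2 0 2 0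
      + ((v p 0 - ψ p 0) * a p 2 0 + (v p 1 - ψ p 1) * a p 2 1 + (v p 2 - ψ p 2) * a p 2 2) * b p 0 1 * symV2 0 2 1
      + ((v p 0 - ψ p 0) * a p 2 0 + (v p 1 - ψ p 1) * a p 2 1 + (v p 2 - ψ p 2) * a p 2 2) * b p 0 2 * symV2 0 2 2
      + ((v p 0 - ψ p 0) * a p 0 0 + (v p 1 - ψ p 1) * a p 0 1 + (v p 2 - ψ p 2) * a p 0 2) * b p 1 0 * symV2 1 0 0
      + ((v p 0 - ψ p 0) * a p 0 0 + (v p 1 - ψ p 1) * a p 0 1 + (v p 2 - ψ p 2) * a p 0 2) * b p 1 1 * symV2 1 0 1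
      + ((v p 0 - ψ p 0) * a p 0 0 + (v p 1 - ψ p 1) * a p 0 1 + (v p 2 - ψ p 2) * a p 0 2) * b p 1 2 * symV2 1 0 2
      + ((v p 0 - ψ p 0) * a p 1 0 + (v p 1 - ψ p 1) * a p 1 1 + (v p 2 - ψ p 2) * a p 1 2) * b p 1 0 * symV2 1 1 0
      + ((v p 0 - ψ p 0) * a p 1 0 + (v p 1 - ψ p 1) * a p 1 1 + (v p 2 - ψ p 2) * a p 1 2) * b p 1 1 * symV2 1 1 1
      + ((v p 0 - ψ p 0) * a p 1 0 + (v p 1 - ψ p 1) * a p 1 1 + (v p 2 - ψ p 2) * a p 1 2) * b p 1 2 * symV2 1 1 2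
      + ((v p 0 - ψ p 0) * a p 2 0 + (v p 1 - ψ p 1) * a p 2 1 + (v p 2 - ψ p 2) * a p 2 2) * b p 1 0 * symV2 1 2 0
      + ((v p 0 - ψ p 0) * a p 2 0 + (v p 1 - ψ p 1) * a p 2 1 + (v p 2 - ψ p 2) * a p 2 2) * b p 1 1 * symV2 1 2 1
      + ((v p 0 - ψ p 0) * a p 2 0 + (v p 1 - ψ p 1) * a p 2 1 + (v p 2 - ψ p 2) * a p 2 2) * b p 1 2 * symV2 1 2 2
      + ((v p 0 - ψ p 0) * a p 0 0 + (v p 1 - ψ p 1) * a p 0 1 + (v p 2 - ψ p 2) * a p 0 2) * b p 2 0 * symV2 2 0 0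
      + ((v p 0 - ψ p 0) * a p 0 0 + (v p 1 - ψ p 1) * a p 0 1 + (v p 2 - ψ p 2) * a p 0 2) * b p 2 1 * symV2 2 0 1
      + ((v p 0 - ψ p 0) * a p 0 0 + (v p 1 - ψ p 1) * a p 0 1 + (v p 2 - ψ p 2) * a p 0 2) * b p 2 2 * symV2 2 0 2
      + ((v p 0 - ψ p 0) * a p 1 0 + (v p 1 - ψ p 1) * a p 1 1 + (v p 2 - ψ p 2) * a p 1 2) * b p 2 0 * symV2 2 1 0
      + ((v p 0 - ψ p 0) * a p 1 0 + (v p 1 - ψ p 1) * a p 1 1 + (v p 2 - ψ p 2) * a p 1 2) * b p 2 1 * symV2 2 1 1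
      + ((v p 0 - ψ p 0) * a p 1 0 + (v p 1 - ψ p 1) * a p 1 1 + (v p 2 - ψ p 2) * a p 1 2) * b p 2 2 * symV2 2 1 2
      + ((v p 0 - ψ p 0) * a p 2 0 + (v p 1 - ψ p 1) * a p 2 1 + (v p 2 - ψ p 2) * a p 2 2) * b p 2 0 * symV2 2 2 0
      + ((v p 0 - ψ p 0) * a p 2 0 + (v p 1 - ψ p 1) * a p 2 1 + (v p 2 - ψ p 2) * a p 2 2) * b p 2 1 * symV2 2 2 1
      + ((v p 0 - ψ p 0) * a p 2 0 + (v p 1 - ψ p 1) * a p 2 1 + (v p 2 - ψ p 2) * a p 2 2) * b p 2 2 * symV2 2 2 2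
      + b p 0 0 * H2 0 0
      + b p 1 0 * H2 0 1
      + b p 2 0 * H2 0 2
      + b p 0 1 * H2 1 0
      + b p 1 1 * H2 1 1
      + b p 2 1 * H2 1 2
      + b p 0 2 * H2 2 0
      + b p 1 2 * H2 2 1
      + b p 2 2 * H2 2 2
      + H3
      + (a p 0 0 * pd 0 q p + a p 1 0 * pd 1 q p + a p 2 0 * pd 2 q p) * H4 0
      + (a p 0 1 * pd 0 q p + a p 1 1 * pd 1 q p + a p 2 1 * pd 2 q p) * H4 1
      + (a p 0 2 * pd 0 q p + a p 1 2 * pd 1 q p + a p 2 2 * pd 2 q p) * H4 2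
      + (- v p 0) * H5 0
      + (- v p 1) * H5 1
      + (- v p 2) * H5 2

end
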